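/- arXiv:cs/0501026 — 8 statements merged into one kernel-verified Lean document; each statement's English description precedes it below -/
import Mathlib

section
/- For every monotone Boolean function f : {0,1}^n → {0,1}, the sensitivity of f equals the block sensitivity of f. -/
/-- Flip the `i`-th bit of `x`. -/
def flipBit {n : ℕ} (x : Fin n → Bool) (i : Fin n) : Fin n → Bool :=
  fun j => if j = i then !x j else x j

/-- Flip all bits of `x` in the block `B`. -/
def flipSet {n : ℕ} (x : Fin n → Bool) (B : Finset (Fin n)) : Fin n → Bool :=
  fun j => if j ∈ B then !x j else x j

/-- Sensitivity of `f` at the input `x`. -/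
def sensAt {n : ℕ} (f : (Fin n → Bool) → Bool) (x : Fin n → Bool) : ℕ :=
  (Finset.univ.filter fun i => f (flipBit x i) ≠ f x).card

/-- Sensitivity of `f`. -/
def sens {n : ℕ} (f : (Fin n → Bool) → Bool) : ℕ :=
  Finset.univ.sup fun x => sensAt f x

/-- 0-sensitivity of `f`: max sensitivity over inputs where `f` is 0. -/
def sens0 {n : ℕ} (f : (Fin n → Bool) → Bool) : ℕ :=
  (Finset.univ.filter fun x => f x = false).sup fun x => sensAt f x

/-- 1-sensitivity of `f`: max sensitivity over inputs where `f` is 1. -/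
def sens1 {n : ℕ} (f : (Fin n → Bool) → Bool) : ℕ :=
  (Finset.univ.filter fun x => f x = true).sup fun x => sensAt f x

/-- Block sensitivity of `f` at `x`: the largest number of pairwise disjoint
nonempty blocks each of whose flips changes the value of `f` at `x`. -/
noncomputable def bsensAt {n : ℕ} (f : (Fin n → Bool) → Bool) (x : Fin n → Bool) : ℕ :=
  sSup {r : ℕ | ∃ B : Fin r → Finset (Fin n),
    (∀ j, (B j).Nonempty ∧ f (flipSet x (B j)) ≠ f x) ∧
    ∀ j j', j ≠ j' → Disjoint (B j) (B j')}

/-- Block sensitivity of `f`. -/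
noncomputable def bsens {n : ℕ} (f : (Fin n → Bool) → Bool) : ℕ :=
  Finset.univ.sup fun x => bsensAt f x

/-! Singleton blocks show `s(f) ≤ bs(f)` for every `f`. Conversely, let `f` be monotone, `f x = 0`
(the case `f x = 1` is the same for the dual function `y ↦ ¬ f (¬ y)`), and let `B₁, …, B_r` be
disjoint blocks sensitive at `x`. Choose `y ≥ x` maximal with `f y = 0`. By maximality `y` is
sensitive at each of its zeros, and each `B_j` contains a zero of `y`, since otherwise flipping
`B_j` in `x` gives a point below `y`, where `f` would be `1`. Hence `r ≤ s(f, y) ≤ s(f)`. -/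

open Function

theorem Fintype.card_le_card_of_pairwise_disjoint_of_forall_exists_mem {ι α : Type*}
    [Fintype ι] {B : ι → Finset α} (hdisj : Pairwise (Disjoint on B)) {Z : Finset α}
    (hZ : ∀ j, ∃ a ∈ Z, a ∈ B j) : Fintype.card ι ≤ Z.card :=
  Finset.card_le_card_of_forall_subsingleton (fun j a => a ∈ B j)
    (fun j _ => hZ j)
    (fun _ _ _ ⟨_, hj⟩ _ ⟨_, hk⟩ =>
      by_contra fun hne => Finset.disjoint_left.mp (hdisj hne) hj hk)

section Sensitivity

variable {n : ℕ}

theorem flipSet_singleton (x : Fin n → Bool) (i : Fin n) : flipSet x {i} = flipBit x i := by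
  funext j
  simp [flipSet, flipBit]

theorem flipSet_compl (x : Fin n → Bool) (B : Finset (Fin n)) :
    flipSet xᶜ B = (flipSet x B)ᶜ := by
  funext j
  by_cases hj : j ∈ B <;> simp [flipSet, hj]

theorem flipBit_compl (x : Fin n → Bool) (i : Fin n) : flipBit xᶜ i = (flipBit x i)ᶜ := by
  simp only [← flipSet_singleton, flipSet_compl]

theorem sensAt_le_sens (f : (Fin n → Bool) → Bool) (x : Fin n → Bool) : sensAt f x ≤ sens f :=
  Finset.le_sup (Finset.mem_univ x)

theorem bddAbove_bsensAt_set (f : (Fin n → Bool) → Bool) (x : Fin n → Bool) :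
    BddAbove {r : ℕ | ∃ B : Fin r → Finset (Fin n),
      (∀ j, (B j).Nonempty ∧ f (flipSet x (B j)) ≠ f x) ∧
      ∀ j j', j ≠ j' → Disjoint (B j) (B j')} := by
  refine ⟨n, fun r ⟨B, hB, hdisj⟩ => ?_⟩
  have hmeet (j : Fin r) : ∃ a ∈ Finset.univ, a ∈ B j :=
    (hB j).1.imp fun a ha => ⟨Finset.mem_univ a, ha⟩
  simpa using Fintype.card_le_card_of_pairwise_disjoint_of_forall_exists_mem hdisj hmeet

theorem sensAt_le_bsensAt (f : (Fin n → Bool) → Bool) (x : Fin n → Bool) :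
    sensAt f x ≤ bsensAt f x := by
  refine le_csSup (bddAbove_bsensAt_set f x) ?_
  set s := Finset.univ.filter fun i => f (flipBit x i) ≠ f x
  let e := s.equivFin.symm
  refine ⟨fun j => {(e j : Fin n)}, fun j => ⟨Finset.singleton_nonempty _, ?_⟩, ?_⟩
  · rw [flipSet_singleton]
    exact (Finset.mem_filter.mp (e j).2).2
  · intro j k hne
    rw [Finset.disjoint_singleton]
    exact fun h => hne (e.injective (Subtype.ext h))

def boolDual (f : (Fin n → Bool) → Bool) : (Fin n → Bool) → Bool :=
  fun y => !f yᶜ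

theorem Monotone.boolDual {f : (Fin n → Bool) → Bool} (hf : Monotone f) :
    Monotone (boolDual f) :=
  Antitone.comp (compl_antitone Bool) (hf.comp_antitone (compl_antitone _))

theorem sensAt_boolDual (f : (Fin n → Bool) → Bool) (y : Fin n → Bool) :
    sensAt (boolDual f) y = sensAt f yᶜ := by
  simp [sensAt, boolDual, ← flipBit_compl]

theorem sens_boolDual_le (f : (Fin n → Bool) → Bool) : sens (boolDual f) ≤ sens f :=
  Finset.sup_le fun y _ => sensAt_boolDual f y ▸ sensAt_le_sens f yᶜ

theorem card_le_sens_of_monotone_of_eq_false {f : (Fin n → Bool) → Bool} (hf : Monotone f)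
    {x : Fin n → Bool} (hfx : f x = false) {r : ℕ} {B : Fin r → Finset (Fin n)}
    (hB : ∀ j, f (flipSet x (B j)) = true) (hdisj : Pairwise (Disjoint on B)) :
    r ≤ sens f := by
  obtain ⟨y, hxy, hy⟩ :=
    Finite.exists_le_maximal (p := fun y => x ≤ y ∧ f y = false) ⟨le_rfl, hfx⟩
  set Z := Finset.univ.filter fun i => y i = false
  have hZ_sens : Z ⊆ Finset.univ.filter fun i => f (flipBit y i) ≠ f y := by
    intro i hi
    have hyi : y i = false := (Finset.mem_filter.mp hi).2
    have hlt : y < flipBit y i := by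
      refine Pi.lt_def.mpr ⟨fun j => ?_, i, by simp [flipBit, hyi]⟩
      by_cases hj : j = i <;> simp [flipBit, hj, hyi]
    have hflip : f (flipBit y i) = true := by
      by_contra h
      exact hlt.not_ge (hy.2 ⟨hxy.trans hlt.le, by simpa using h⟩ hlt.le)
    simp [hflip, hy.1.2]
  have hB_meets_Z (j : Fin r) : ∃ i ∈ Z, i ∈ B j := by
    by_contra! hZB
    have hle : flipSet x (B j) ≤ y := fun i => by
      by_cases hi : i ∈ B j
      · have hyi : y i = true := by simpa [Z] using mt (hZB i) (not_not.mpr hi)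
        simp [flipSet, hi, hyi]
      · simpa [flipSet, hi] using hxy i
    simpa [hB j, hy.1.2, Bool.le_iff_imp] using hf hle
  calc r = Fintype.card (Fin r) := (Fintype.card_fin r).symm
    _ ≤ Z.card := Fintype.card_le_card_of_pairwise_disjoint_of_forall_exists_mem hdisj hB_meets_Z
    _ ≤ sensAt f y := Finset.card_le_card hZ_sens
    _ ≤ sens f := sensAt_le_sens f y

theorem card_le_sens_of_monotone {f : (Fin n → Bool) → Bool} (hf : Monotone f)
    {x : Fin n → Bool} {r : ℕ} {B : Fin r → Finset (Fin n)}
    (hB : ∀ j, f (flipSet x (B j)) ≠ f x) (hdisj : Pairwise (Disjoint on B)) :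
    r ≤ sens f := by
  cases hfx : f x with
  | false =>
    exact card_le_sens_of_monotone_of_eq_false hf hfx (fun j => by simpa [hfx] using hB j) hdisj
  | true =>
    refine (card_le_sens_of_monotone_of_eq_false hf.boolDual (x := xᶜ) ?_ (fun j => ?_)
      hdisj).trans (sens_boolDual_le f)
    · simp [boolDual, hfx]
    · simpa [boolDual, flipSet_compl, hfx] using hB j

theorem bsensAt_le_sens_of_monotone {f : (Fin n → Bool) → Bool} (hf : Monotone f)
    (x : Fin n → Bool) : bsensAt f x ≤ sens f :=
  csSup_le' fun _ ⟨_, hB, hdisj⟩ => card_le_sens_of_monotone hf (fun j => (hB j).2) hdisj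

end Sensitivity

/-- For monotone Boolean functions, sensitivity equals block sensitivity. -/
theorem monotone_sens_eq_bsens {n : ℕ} (f : (Fin n → Bool) → Bool)
    (hmono : ∀ x y : Fin n → Bool, (∀ i, x i ≤ y i) → f x ≤ f y) :
    sens f = bsens f :=
  le_antisymm (Finset.sup_mono_fun fun x _ => sensAt_le_bsensAt f x)
    (Finset.sup_le fun x _ => bsensAt_le_sens_of_monotone (fun x y h => hmono x y h) x)
end

section
/- Let G be a transitive permutation group on [n] and S ⊆ [n] with |S| = k ≥ 1. Then there exist at least n/k² pairwise disjoint G-shifts of S, i.e., permutations π_1,…,π_m ∈ G with m ≥ n/k² such that the sets S^{π_1},…,S^{π_m} are pairwise disjoint. -/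
/-- A permutation group on `[n]` is transitive. -/
def IsTransitive {n : ℕ} (G : Subgroup (Equiv.Perm (Fin n))) : Prop :=
  ∀ i j : Fin n, ∃ π ∈ G, π i = j

open Classical in
/-- The minterm-transitive function `p^G` defined by the partial assignment
`p` with support `S`: it is 1 on `x` iff `x` extends some `G`-shift of `p`. -/
noncomputable def mintermFn {n : ℕ} (G : Subgroup (Equiv.Perm (Fin n)))
    (S : Finset (Fin n)) (p : Fin n → Bool) : (Fin n → Bool) → Bool :=
  fun x => decide (∃ π ∈ G, ∀ i ∈ S, x (π i) = p i)

/-- A transitive group admits at least `n/k²` pairwise disjoint `G`-shifts of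
a set `S` of size `k ≥ 1` (i.e. `m` disjoint shifts with `m·k² ≥ n`). -/
theorem disjoint_shifts {n k : ℕ} (G : Subgroup (Equiv.Perm (Fin n)))
    (hG : IsTransitive G) (S : Finset (Fin n)) (hk : S.card = k) (h1 : 1 ≤ k) :
    ∃ (m : ℕ) (π : Fin m → Equiv.Perm (Fin n)),
      n ≤ m * k ^ 2 ∧ (∀ j, π j ∈ G) ∧
      (∀ j j', j ≠ j' → Disjoint (S.image (π j)) (S.image (π j'))) := by

  classical
  have hn : 0 < n := by
    have hS : S.Nonempty := Finset.card_pos.mp (by omega)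
    obtain ⟨s, _⟩ := hS
    exact s.pos
  set P : ℕ → Prop := fun m => ∃ π : Fin m → Equiv.Perm (Fin n),
      (∀ j, π j ∈ G) ∧
      (∀ j j', j ≠ j' → Disjoint (S.image (π j)) (S.image (π j'))) with hP
  have hPle : ∀ m, P m → m * k ≤ n := by
    rintro m ⟨π, hπG, hdisj⟩
    have hcard : (Finset.univ.biUnion fun j : Fin m => S.image (π j)).card = m * k := by
      rw [Finset.card_biUnion (fun j _ j' _ h => hdisj j j' h)]
      simp [Finset.card_image_of_injective _ (π _).injective, hk, mul_comm]
    calc m * k = _ := hcard.symm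
      _ ≤ (Finset.univ : Finset (Fin n)).card := Finset.card_le_card (Finset.subset_univ _)
      _ = n := by simp
  have hP0 : P 0 := ⟨Fin.elim0, fun j => j.elim0, fun j => j.elim0⟩
  set M := Nat.findGreatest P n with hM
  have hPM : P M := Nat.findGreatest_spec (Nat.zero_le n) hP0
  have hnotP : ¬ P (M + 1) := by
    intro h
    have h1' := hPle _ h
    have hle : M + 1 ≤ n := le_trans (Nat.le_mul_of_pos_right _ h1) h1'
    have := Nat.le_findGreatest hle h
    omega
  obtain ⟨π, hπG, hdisj⟩ := hPM
  refine ⟨M, π, ?_, hπG, hdisj⟩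
  set U : Finset (Fin n) := Finset.univ.biUnion fun j => S.image (π j) with hU
  have hUcard : U.card ≤ M * k := by
    calc U.card ≤ ∑ j : Fin M, (S.image (π j)).card := Finset.card_biUnion_le
      _ = M * k := by
          simp [Finset.card_image_of_injective _ (π _).injective, hk, mul_comm]
  have hmax : ∀ g : Equiv.Perm (Fin n), g ∈ G → ∃ s ∈ S, g s ∈ U := by
    intro g hg
    by_contra hcon
    push_neg at hcon
    apply hnotP
    refine ⟨Fin.snoc π g, ?_, ?_⟩
    · intro j
      refine Fin.lastCases ?_ ?_ j
      · simpa using hg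
      · intro i; simpa using hπG i
    · have hkey : ∀ j : Fin M, Disjoint (S.image g) (S.image (π j)) := by
        intro j
        rw [Finset.disjoint_left]
        intro a ha ha'
        obtain ⟨s, hs, rfl⟩ := Finset.mem_image.mp ha
        exact hcon s hs (Finset.mem_biUnion.mpr ⟨j, Finset.mem_univ _, ha'⟩)
      intro j j'
      refine Fin.lastCases ?_ (fun i => ?_) j
      · refine Fin.lastCases ?_ (fun i' => ?_) j'
        · intro hne; exact absurd rfl hne
        · intro _
          simpa [Fin.snoc_last, Fin.snoc_castSucc] using hkey i'
      · refine Fin.lastCases ?_ (fun i' => ?_) j'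
        · intro _
          simpa [Fin.snoc_last, Fin.snoc_castSucc] using (hkey i).symm
        · intro hne
          have hii : i ≠ i' := fun h => hne (by rw [h])
          simpa [Fin.snoc_castSucc] using hdisj i i' hii
  set GS : Finset (Equiv.Perm (Fin n)) := Finset.univ.filter (· ∈ G) with hGS
  set F : Fin n → Fin n → Finset (Equiv.Perm (Fin n)) :=
    fun s u => GS.filter (fun g => g s = u) with hF
  have hfib_eq : ∀ s u u', (F s u).card = (F s u').card := by
    intro s u u'
    obtain ⟨h, hhG, hhu⟩ := hG u u'
    apply Finset.card_bij' (fun g _ => h * g) (fun g _ => h⁻¹ * g)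
    · intro g hgm
      simp only [hF, hGS, Finset.mem_filter, Finset.mem_univ, true_and] at hgm ⊢
      exact ⟨mul_mem hhG hgm.1, by rw [Equiv.Perm.mul_apply, hgm.2, hhu]⟩
    · intro g hgm
      simp only [hF, hGS, Finset.mem_filter, Finset.mem_univ, true_and] at hgm ⊢
      refine ⟨mul_mem (inv_mem hhG) hgm.1, ?_⟩
      rw [Equiv.Perm.mul_apply, hgm.2, ← hhu]
      simp
    · intro g _; simp
    · intro g _; simp
  have hfib_sum : ∀ s : Fin n, ∑ u : Fin n, (F s u).card = GS.card := by
    intro s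
    exact (Finset.card_eq_sum_card_fiberwise (f := fun g : Equiv.Perm (Fin n) => g s)
      (fun g _ => Finset.mem_univ _)).symm
  have hfib_n : ∀ s u, n * (F s u).card = GS.card := by
    intro s u
    calc n * (F s u).card = ∑ _u' : Fin n, (F s u).card := by
          simp [mul_comm]
      _ = ∑ u' : Fin n, (F s u').card := Finset.sum_congr rfl (fun u' _ => hfib_eq s u u')
      _ = GS.card := hfib_sum s
  have hsubset : GS ⊆ (S ×ˢ U).biUnion (fun p => F p.1 p.2) := by
    intro g hg
    have hgG : g ∈ G := (Finset.mem_filter.mp hg).2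
    obtain ⟨s, hs, hsu⟩ := hmax g hgG
    exact Finset.mem_biUnion.mpr ⟨(s, g s), Finset.mem_product.mpr ⟨hs, hsu⟩,
      Finset.mem_filter.mpr ⟨hg, rfl⟩⟩
  have hGScard : GS.card ≤ ∑ p ∈ S ×ˢ U, (F p.1 p.2).card :=
    le_trans (Finset.card_le_card hsubset) Finset.card_biUnion_le
  have hmain : n * GS.card ≤ M * k ^ 2 * GS.card := by
    calc n * GS.card ≤ n * ∑ p ∈ S ×ˢ U, (F p.1 p.2).card :=
          Nat.mul_le_mul_left n hGScard
      _ = ∑ p ∈ S ×ˢ U, n * (F p.1 p.2).card := Finset.mul_sum _ _ _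
      _ = ∑ _p ∈ S ×ˢ U, GS.card := Finset.sum_congr rfl (fun p _ => hfib_n p.1 p.2)
      _ = (S ×ˢ U).card * GS.card := by rw [Finset.sum_const, smul_eq_mul]
      _ = k * U.card * GS.card := by rw [Finset.card_product, hk]
      _ ≤ k * (M * k) * GS.card := by
          exact Nat.mul_le_mul_right _ (Nat.mul_le_mul_left _ hUcard)
      _ = M * k ^ 2 * GS.card := by ring
  have hGSpos : 0 < GS.card := by
    refine Finset.card_pos.mpr ⟨1, ?_⟩
    simp [hGS, one_mem]
  exact Nat.le_of_mul_le_mul_right (by simpa [mul_comm] using hmain) hGSpos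
end

section
/- If G is a transitive permutation group on [n] and T ⊆ [n] is a set that intersects every G-shift S^π (π ∈ G) of a fixed set S of size k ≥ 1, then |T| ≥ n/k. -/
/-!
Double counting of the pairs `(g, s) ∈ G × S` with `g • s ∈ T`. Every `g` gives at least one
pair, since `g • S` meets `T`. Conversely, for fixed `s` and `t` the elements sending `s` to `t`
form a fibre of `g ↦ g • s`; by transitivity all `n` fibres are translates of one another, so each
has `|G| / n` elements. Hence `|G| ≤ |S| |T| |G| / n`.
-/

open Finset MulAction

section BlockerBound

variable {G X : Type*} [Group G] [MulAction G X] [DecidableEq X]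

theorem card_image_smul_inter (g : G) (S T : Finset X) :
    #(S.image (g • ·) ∩ T) = #{s ∈ S | g • s ∈ T} := by
  rw [← filter_mem_eq_inter, filter_image, card_image_of_injective _ (MulAction.injective g)]

variable [Fintype G]

theorem card_filter_smul_eq_smul_right (x y : X) (h : G) :
    #{g : G | g • x = h • y} = #{g : G | g • x = y} := by
  refine card_nbij' (h⁻¹ * ·) (h * ·) ?_ ?_ ?_ ?_ <;>
    intro g hg <;> simp_all [mul_smul]

variable [Fintype X] [IsPretransitive G X]

theorem card_filter_smul_eq_mul_card (x y : X) :
    #{g : G | g • x = y} * Fintype.card X = Fintype.card G := by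
  have hfibres : ∀ y', #{g : G | g • x = y'} = #{g : G | g • x = y} := fun y' => by
    obtain ⟨h, rfl⟩ := exists_smul_eq G y y'
    exact card_filter_smul_eq_smul_right x y h
  rw [← card_univ (α := G), card_eq_sum_card_fiberwise (s := univ) (t := univ) (f := (· • x))
    (fun _ _ => mem_univ _)]
  simp only [hfibres, sum_const, card_univ, smul_eq_mul, mul_comm]

theorem card_filter_smul_mem_mul_card (x : X) (T : Finset X) :
    #{g : G | g • x ∈ T} * Fintype.card X = #T * Fintype.card G := by
  calc #{g : G | g • x ∈ T} * Fintype.card X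
      = ∑ t ∈ T, #{g : G | g • x = t} * Fintype.card X := by
        rw [card_eq_sum_card_fiberwise (s := {g : G | g • x ∈ T}) (t := T) (f := (· • x))
          (fun _ hg => (mem_filter.1 hg).2), sum_mul]
        refine sum_congr rfl fun t ht => ?_
        rw [filter_filter]
        congr 2
        exact filter_congr fun g _ => ⟨And.right, fun hgt => ⟨hgt ▸ ht, hgt⟩⟩
    _ = ∑ _t ∈ T, Fintype.card G := sum_congr rfl fun t _ => card_filter_smul_eq_mul_card x t
    _ = #T * Fintype.card G := by rw [sum_const, smul_eq_mul]

theorem card_le_card_mul_card_of_forall_image_smul_inter_nonempty {S T : Finset X}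
    (hT : ∀ g : G, (S.image (g • ·) ∩ T).Nonempty) :
    Fintype.card X ≤ #T * #S := by
  have hcount : Fintype.card G * Fintype.card X ≤ Fintype.card G * (#T * #S) :=
    calc Fintype.card G * Fintype.card X
        ≤ (∑ g : G, #(S.image (g • ·) ∩ T)) * Fintype.card X := by
          gcongr
          rw [← card_univ, card_eq_sum_ones]
          exact sum_le_sum fun g _ => (hT g).card_pos
      _ = ∑ s ∈ S, #{g : G | g • s ∈ T} * Fintype.card X := by
          simp only [card_image_smul_inter, card_filter, sum_comm (s := univ), sum_mul]
      _ = Fintype.card G * (#T * #S) := by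
          simp only [card_filter_smul_mem_mul_card, sum_const, smul_eq_mul]
          ring
  exact Nat.le_of_mul_le_mul_left hcount Fintype.card_pos

end BlockerBound

theorem IsTransitive.isPretransitive {n : ℕ} {G : Subgroup (Equiv.Perm (Fin n))}
    (hG : IsTransitive G) : IsPretransitive G (Fin n) :=
  ⟨fun i j => let ⟨π, hπ, hπij⟩ := hG i j; ⟨⟨π, hπ⟩, hπij⟩⟩

theorem blocker_card_lower_bound_general {n k : ℕ} (G : Subgroup (Equiv.Perm (Fin n)))
    (hG : IsTransitive G) (S T : Finset (Fin n)) (hk : S.card = k)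
    (hT : ∀ π : Equiv.Perm (Fin n), π ∈ G → ((S.image π) ∩ T).Nonempty) :
    n ≤ T.card * k := by
  classical
  have := hG.isPretransitive
  subst hk
  simpa using card_le_card_mul_card_of_forall_image_smul_inter_nonempty (G := G)
    fun g => hT g g.2

/-- If `T` intersects every `G`-shift of a set `S` of size `k ≥ 1`, where `G`
is transitive, then `|T| ≥ n/k`, i.e. `|T|·k ≥ n`. -/
theorem blocker_card_lower_bound {n k : ℕ} (G : Subgroup (Equiv.Perm (Fin n)))
    (hG : IsTransitive G) (S T : Finset (Fin n)) (hk : S.card = k) (h1 : 1 ≤ k)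
    (hT : ∀ π : Equiv.Perm (Fin n), π ∈ G → ((S.image π) ∩ T).Nonempty) :
    n ≤ T.card * k :=
  blocker_card_lower_bound_general G hG S T hk hT
end

section
/- Let G be a transitive permutation group on [n] and let f = p^G be a minterm-transitive function defined by a partial assignment p with support of size k ≥ 1. Then the 1-sensitivity of f satisfies s¹(f) ≥ k/2. -/
/-
For either bit `b`, fill the positions outside `S` with `!b`; the result extends `p`. A certificate
`π` maps the `b`-positions of `p` injectively to `b`-positions of the input, so after flipping any
`b`-position of `p` the input has one `b` too few for every certificate. Hence the 1-sensitivity is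
at least the number of `b`'s in `p`, for both values of `b`, and one of these counts is at least
`k / 2`.
-/

section Sensitivity

variable {n : ℕ} {f : (Fin n → Bool) → Bool} {x : Fin n → Bool}

theorem card_le_sensAt {T : Finset (Fin n)} (hT : ∀ i ∈ T, f (flipBit x i) ≠ f x) :
    T.card ≤ sensAt f x :=
  Finset.card_le_card fun i hi => Finset.mem_filter.mpr ⟨Finset.mem_univ i, hT i hi⟩

theorem sensAt_le_sens1 (hx : f x = true) : sensAt f x ≤ sens1 f :=
  Finset.le_sup (Finset.mem_filter.mpr ⟨Finset.mem_univ x, hx⟩)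

end Sensitivity

section Minterm

variable {n : ℕ} (G : Subgroup (Equiv.Perm (Fin n))) (S : Finset (Fin n)) (p : Fin n → Bool)

def extendBy (c : Bool) : Fin n → Bool :=
  fun j => if j ∈ S then p j else c

theorem mintermFn_eq_true_iff {y : Fin n → Bool} :
    mintermFn G S p y = true ↔ ∃ π ∈ G, ∀ i ∈ S, y (π i) = p i := by
  simp only [mintermFn, decide_eq_true_eq]

theorem mintermFn_extendBy (c : Bool) : mintermFn G S p (extendBy S p c) = true :=
  (mintermFn_eq_true_iff G S p).mpr ⟨1, G.one_mem, fun i hi => by simp [extendBy, hi]⟩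

theorem card_filter_pattern_le_of_mintermFn {y : Fin n → Bool}
    (hy : mintermFn G S p y = true) (b : Bool) :
    (S.filter (p · = b)).card ≤ (Finset.univ.filter (y · = b)).card := by
  obtain ⟨π, -, hπ⟩ := (mintermFn_eq_true_iff G S p).mp hy
  refine Finset.card_le_card_of_injOn π (fun j hj => ?_) π.injective.injOn
  rw [Finset.mem_coe, Finset.mem_filter] at hj ⊢
  exact ⟨Finset.mem_univ _, (hπ j hj.1).trans hj.2⟩

variable {S p}

theorem filter_flipBit_extendBy_eq_erase {b : Bool} {i : Fin n} (hi : i ∈ S) (hpi : p i = b) :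
    Finset.univ.filter (flipBit (extendBy S p (!b)) i · = b) =
      (S.filter (p · = b)).erase i := by
  ext j
  rw [Finset.mem_filter_univ, Finset.mem_erase, Finset.mem_filter]
  by_cases hji : j = i
  · subst hji
    simp [flipBit, extendBy, hi, hpi]
  · by_cases hj : j ∈ S <;> simp [flipBit, extendBy, hji, hj]

theorem mintermFn_flipBit_extendBy {b : Bool} {i : Fin n} (hi : i ∈ S) (hpi : p i = b) :
    mintermFn G S p (flipBit (extendBy S p (!b)) i) = false := by
  by_contra hflip
  have hcard := card_filter_pattern_le_of_mintermFn G S p (Bool.not_eq_false _ ▸ hflip) b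
  rw [filter_flipBit_extendBy_eq_erase hi hpi] at hcard
  have hmem : i ∈ S.filter (p · = b) := Finset.mem_filter.mpr ⟨hi, hpi⟩
  exact (Finset.card_erase_lt_of_mem hmem).not_ge hcard

variable (S p)

theorem card_filter_pattern_le_sens1_mintermFn (b : Bool) :
    (S.filter (p · = b)).card ≤ sens1 (mintermFn G S p) := by
  have hx := mintermFn_extendBy G S p (!b)
  refine le_trans (card_le_sensAt fun i hi => ?_) (sensAt_le_sens1 hx)
  rw [Finset.mem_filter] at hi
  rw [mintermFn_flipBit_extendBy G hi.1 hi.2, hx]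
  decide

end Minterm

theorem sens1_lower_bound_general {n k : ℕ} (G : Subgroup (Equiv.Perm (Fin n)))
    (S : Finset (Fin n)) (p : Fin n → Bool)
    (hk : S.card = k) :
    k ≤ 2 * sens1 (mintermFn G S p) := by
  have hsplit : (S.filter (p · = true)).card + (S.filter (p · = false)).card = k := by
    simpa only [Bool.not_eq_true, hk] using
      Finset.card_filter_add_card_filter_not (s := S) (p · = true)
  have htrue := card_filter_pattern_le_sens1_mintermFn G S p true
  have hfalse := card_filter_pattern_le_sens1_mintermFn G S p false
  omega

/-- For a minterm-transitive function with pattern support size `k ≥ 1`,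
the 1-sensitivity is at least `k/2`. -/
theorem sens1_lower_bound {n k : ℕ} (G : Subgroup (Equiv.Perm (Fin n)))
    (hG : IsTransitive G) (S : Finset (Fin n)) (p : Fin n → Bool)
    (hk : S.card = k) (h1 : 1 ≤ k) :
    k ≤ 2 * sens1 (mintermFn G S p) :=
  sens1_lower_bound_general G S p hk
end

section
/- Let G be a transitive permutation group on [n] and let f = p^G be a non-constant minterm-transitive function defined by a partial assignment p with support of size k ≥ 1. Then the 0-sensitivity of f satisfies s⁰(f) = Ω(n/k²); concretely, s⁰(f) is at least the maximum number of pairwise disjoint G-shifts of p, which is at least n/k² (up to constant factors). -/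
section Aux
open Classical

lemma flipBit_flipSet {n : ℕ} (z : Fin n → Bool) (P : Finset (Fin n)) (i : Fin n)
    (hi : i ∉ P) : flipBit (flipSet z P) i = flipSet z (insert i P) := by
  funext j
  simp only [flipBit, flipSet, Finset.mem_insert]
  by_cases hj : j = i
  · subst hj; simp [hi]
  · simp [hj]

lemma flipSet_empty {n : ℕ} (z : Fin n → Bool) : flipSet z ∅ = z := by
  funext j; simp [flipSet]

lemma partOne {n : ℕ} (G : Subgroup (Equiv.Perm (Fin n)))
    (S : Finset (Fin n)) (p : Fin n → Bool)
    (hnc : ∃ z, mintermFn G S p z = false)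
    (m : ℕ) (π : Fin m → Equiv.Perm (Fin n)) (hπ : ∀ j, π j ∈ G)
    (hd : ∀ j j', j ≠ j' → Disjoint (S.image (π j)) (S.image (π j'))) :
    m ≤ sens0 (mintermFn G S p) := by
  obtain ⟨z, hz⟩ := hnc
  set f := mintermFn G S p with hf
  classical
  set Tj : Fin m → Finset (Fin n) := fun j =>
    (S.image (π j)).filter (fun i => z i ≠ p ((π j).symm i)) with hTj
  set T : Finset (Fin n) := Finset.univ.biUnion Tj with hT
  have hne : (T.powerset.filter fun P => f (flipSet z P) = false).Nonempty := by
    refine ⟨∅, ?_⟩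
    simp [flipSet_empty, hz]
  obtain ⟨P, hPmem, hPmax⟩ := Finset.exists_max_image _ Finset.card hne
  rw [Finset.mem_filter, Finset.mem_powerset] at hPmem
  obtain ⟨hPT, hPf⟩ := hPmem
  -- maximality: flipping any extra i in T gives true
  have hmaxi : ∀ i ∈ T, i ∉ P → f (flipSet z (insert i P)) = true := by
    intro i hiT hiP
    by_contra h
    have h' : f (flipSet z (insert i P)) = false := by
      cases hfi : f (flipSet z (insert i P)) <;> simp_all
    have hmem : insert i P ∈ T.powerset.filter fun Q => f (flipSet z Q) = false := by
      rw [Finset.mem_filter, Finset.mem_powerset]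
      exact ⟨Finset.insert_subset hiT hPT, h'⟩
    have := hPmax _ hmem
    have : P.card < (insert i P).card := by
      rw [Finset.card_insert_of_notMem hiP]; omega
    omega
  -- each Tj has an element outside P
  have hkey : ∀ j : Fin m, ∃ i, i ∈ Tj j ∧ i ∉ P := by
    intro j
    by_contra h
    push_neg at h
    have hsub : Tj j ⊆ P := fun i hi => h i hi
    have : f (flipSet z P) = true := by
      rw [hf, mintermFn]
      rw [decide_eq_true_eq]
      refine ⟨π j, hπ j, ?_⟩
      intro s hs
      have hiS : π j s ∈ S.image (π j) := Finset.mem_image_of_mem _ hs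
      have hsymm : (π j).symm (π j s) = s := Equiv.symm_apply_apply _ _
      by_cases hiP : π j s ∈ P
      · have hiT : π j s ∈ T := hPT hiP
        rw [hT, Finset.mem_biUnion] at hiT
        obtain ⟨j', _, hj'⟩ := hiT
        have hjj : j' = j := by
          by_contra hne'
          have h1 : π j s ∈ S.image (π j') := (Finset.mem_filter.mp hj').1
          exact absurd (Finset.disjoint_left.mp (hd j' j hne') h1 hiS) (by simp)
        rw [hjj] at hj'
        have hzi : z (π j s) ≠ p s := by
          have := (Finset.mem_filter.mp hj').2
          rwa [hsymm] at this
        simp only [flipSet, if_pos hiP]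
        cases hzp : z (π j s) <;> cases hps : p s <;> simp_all
      · simp only [flipSet, if_neg hiP]
        by_contra hzi
        have : π j s ∈ Tj j := by
          rw [hTj]
          exact Finset.mem_filter.mpr ⟨hiS, by rwa [hsymm]⟩
        exact hiP (hsub this)
    rw [this] at hPf; simp at hPf
  choose g hg1 hg2 using hkey
  have hsens : m ≤ sensAt f (flipSet z P) := by
    have hinj : Function.Injective g := by
      intro j j' hjj
      by_contra hne'
      have h1 : g j ∈ S.image (π j) := (Finset.mem_filter.mp (hg1 j)).1
      have h2 : g j ∈ S.image (π j') := hjj ▸ (Finset.mem_filter.mp (hg1 j')).1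
      exact absurd (Finset.disjoint_left.mp (hd j j' hne') h1 h2) (by simp)
    have himg : Finset.univ.image g ⊆
        Finset.univ.filter fun i => f (flipBit (flipSet z P) i) ≠ f (flipSet z P) := by
      intro i hi
      rw [Finset.mem_image] at hi
      obtain ⟨j, _, rfl⟩ := hi
      rw [Finset.mem_filter]
      refine ⟨Finset.mem_univ _, ?_⟩
      rw [flipBit_flipSet z P _ (hg2 j), hPf,
        hmaxi (g j) (Finset.mem_biUnion.mpr ⟨j, Finset.mem_univ _, hg1 j⟩) (hg2 j)]
      simp
    calc m = (Finset.univ.image g).card := by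
            rw [Finset.card_image_of_injective _ hinj, Finset.card_univ, Fintype.card_fin]
      _ ≤ _ := Finset.card_le_card himg
  refine le_trans hsens ?_
  exact Finset.le_sup (f := fun x => sensAt f x)
    (Finset.mem_filter.mpr ⟨Finset.mem_univ _, hPf⟩)

lemma packing {n k : ℕ} (G : Subgroup (Equiv.Perm (Fin n))) (hG : IsTransitive G)
    (S : Finset (Fin n)) (hk : S.card = k) (h1 : 1 ≤ k) :
    ∃ (m : ℕ) (π : Fin m → Equiv.Perm (Fin n)), (∀ j, π j ∈ G) ∧
      (∀ j j', j ≠ j' → Disjoint (S.image (π j)) (S.image (π j'))) ∧ n ≤ m * k ^ 2 := by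
  classical
  set Q : ℕ → Prop := fun m => ∃ π : Fin m → Equiv.Perm (Fin n), (∀ j, π j ∈ G) ∧
      ∀ j j', j ≠ j' → Disjoint (S.image (π j)) (S.image (π j')) with hQdef
  have hQ0 : Q 0 := ⟨fun j => j.elim0, fun j => j.elim0, fun j => j.elim0⟩
  have himgcard : ∀ g : Equiv.Perm (Fin n), (S.image g).card = k := by
    intro g; rw [Finset.card_image_of_injective _ g.injective, hk]
  have hbound : ∀ m', Q m' → m' * k ≤ n := by
    intro m' ⟨π, hπ, hd⟩
    have := Finset.card_biUnion (s := (Finset.univ : Finset (Fin m')))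
      (t := fun j => S.image (π j)) (fun x _ y _ h => hd x y h)
    have hle : (Finset.univ.biUnion fun j => S.image (π j)).card ≤ n := by
      have := Finset.card_le_univ (Finset.univ.biUnion fun j => S.image (π j))
      simpa using this
    rw [this] at hle
    simpa [himgcard] using hle
  set m := Nat.findGreatest Q n with hm
  have hQm : Q m := Nat.findGreatest_spec (Nat.zero_le n) hQ0
  obtain ⟨π, hπ, hd⟩ := hQm
  refine ⟨m, π, hπ, hd, ?_⟩
  -- maximality
  have hmaxi : ∀ g : Equiv.Perm (Fin n), g ∈ G →
      ∃ j, ¬ Disjoint (S.image g) (S.image (π j)) := by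
    intro g hg
    by_contra h
    push_neg at h
    have hQm1 : Q (m + 1) := by
      refine ⟨Fin.snoc π g, ?_, ?_⟩
      · intro j
        refine Fin.lastCases ?_ ?_ j
        · simp [Fin.snoc_last]; exact hg
        · intro i; simp [Fin.snoc_castSucc]; exact hπ i
      · intro j j' hjj
        rcases Fin.eq_castSucc_or_eq_last j with ⟨i, rfl⟩ | rfl <;>
          rcases Fin.eq_castSucc_or_eq_last j' with ⟨i', rfl⟩ | rfl
        · simp only [Fin.snoc_castSucc]
          exact hd i i' (fun hc => hjj (by rw [hc]))
        · simp only [Fin.snoc_castSucc, Fin.snoc_last]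
          exact (h i).symm
        · simp only [Fin.snoc_castSucc, Fin.snoc_last]
          exact h i'
        · exact absurd rfl hjj
    have hmn : m + 1 ≤ n := by
      have hb := hbound (m+1) hQm1
      nlinarith
    exact Nat.findGreatest_is_greatest (by omega) hmn hQm1
  -- counting
  set N : Fin n → ℕ := fun u =>
    (Finset.univ.filter fun g : ↥G => u ∈ S.image (g : Equiv.Perm (Fin n))).card with hN
  have hn1 : 1 ≤ n := by
    have := Finset.card_le_univ S
    simp only [Finset.card_univ, Fintype.card_fin] at this
    omega
  have hconst : ∀ u v : Fin n, N u = N v := by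
    intro u v
    obtain ⟨h, hh, hhu⟩ := hG u v
    apply Finset.card_bij (fun g _ => (⟨h, hh⟩ : ↥G) * g)
    · intro g hg
      rw [Finset.mem_filter] at hg ⊢
      refine ⟨Finset.mem_univ _, ?_⟩
      obtain ⟨s, hs, hgs⟩ := Finset.mem_image.mp hg.2
      exact Finset.mem_image.mpr ⟨s, hs, by simp [hgs, hhu]⟩
    · intro g _ g' _ hgg
      exact mul_left_cancel hgg
    · intro g' hg'
      rw [Finset.mem_filter] at hg'
      refine ⟨(⟨h, hh⟩ : ↥G)⁻¹ * g', Finset.mem_filter.mpr ⟨Finset.mem_univ _, ?_⟩, by group⟩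
      obtain ⟨s, hs, hgs⟩ := Finset.mem_image.mp hg'.2
      refine Finset.mem_image.mpr ⟨s, hs, ?_⟩
      have : (h⁻¹ : Equiv.Perm (Fin n)) ((g' : Equiv.Perm (Fin n)) s) = u := by
        rw [hgs, ← hhu]; simp
      simpa using this
  set u0 : Fin n := ⟨0, hn1⟩ with hu0
  have hsum : ∑ u : Fin n, N u = Fintype.card ↥G * k := by
    have h1' : ∀ u : Fin n, N u = ∑ g : ↥G,
        if u ∈ S.image (g : Equiv.Perm (Fin n)) then 1 else 0 := by
      intro u
      simp only [hN, Finset.card_filter]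
    rw [Finset.sum_congr rfl (fun u _ => h1' u), Finset.sum_comm]
    have h2' : ∀ g : ↥G, ∑ u : Fin n,
        (if u ∈ S.image (g : Equiv.Perm (Fin n)) then 1 else 0) = k := by
      intro g
      rw [Finset.sum_ite_mem]
      simp [himgcard]
    rw [Finset.sum_congr rfl (fun g _ => h2' g), Finset.sum_const, Finset.card_univ,
      smul_eq_mul]
  have hsum2 : ∑ u : Fin n, N u = n * N u0 := by
    rw [Finset.sum_congr rfl (fun u _ => hconst u u0), Finset.sum_const, Finset.card_univ,
      Fintype.card_fin, smul_eq_mul]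
  -- cover
  set U : Finset (Fin n) := Finset.univ.biUnion (fun j => S.image (π j)) with hU
  have hUcard : U.card = m * k := by
    rw [hU, Finset.card_biUnion (fun x _ y _ h => hd x y h)]
    simp [himgcard, Finset.sum_const, mul_comm]
  have hcover : (Finset.univ : Finset ↥G) ⊆
      U.biUnion fun u => Finset.univ.filter fun g : ↥G => u ∈ S.image (g : Equiv.Perm (Fin n)) := by
    intro g _
    obtain ⟨j, hj⟩ := hmaxi (g : Equiv.Perm (Fin n)) g.2
    obtain ⟨u, hu1, hu2⟩ := Finset.not_disjoint_iff.mp hj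
    refine Finset.mem_biUnion.mpr ⟨u, ?_, Finset.mem_filter.mpr ⟨Finset.mem_univ _, hu1⟩⟩
    exact Finset.mem_biUnion.mpr ⟨j, Finset.mem_univ _, hu2⟩
  have hG_le : Fintype.card ↥G ≤ m * k * N u0 := by
    calc Fintype.card ↥G = (Finset.univ : Finset ↥G).card := (Finset.card_univ).symm
      _ ≤ (U.biUnion fun u => Finset.univ.filter
            fun g : ↥G => u ∈ S.image (g : Equiv.Perm (Fin n))).card :=
          Finset.card_le_card hcover
      _ ≤ ∑ u ∈ U, N u := Finset.card_biUnion_le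
      _ = U.card * N u0 := by
          rw [Finset.sum_congr rfl (fun u _ => hconst u u0), Finset.sum_const, smul_eq_mul]
      _ = m * k * N u0 := by rw [hUcard]
  have hNpos : 0 < N u0 := by
    rcases Nat.eq_zero_or_pos (N u0) with h0 | h
    · exfalso
      have hGpos : 0 < Fintype.card ↥G := Fintype.card_pos
      rw [hsum] at hsum2
      rw [h0, mul_zero] at hsum2
      nlinarith
    · exact h
  have key : n * N u0 ≤ m * k ^ 2 * N u0 := by
    calc n * N u0 = Fintype.card ↥G * k := by rw [← hsum2, hsum]
      _ ≤ m * k * N u0 * k := Nat.mul_le_mul hG_le (le_refl k)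
      _ = m * k ^ 2 * N u0 := by ring
  exact Nat.le_of_mul_le_mul_right key hNpos

end Aux

/-- For a non-constant minterm-transitive function with pattern support size
`k ≥ 1` and transitive `G`, the 0-sensitivity is at least the size of any
family of pairwise disjoint `G`-shifts of the pattern, and in particular there
is `m` with `m·k² ≥ n` and `s⁰(f) ≥ m`. -/
theorem sens0_lower_bound {n k : ℕ} (G : Subgroup (Equiv.Perm (Fin n)))
    (hG : IsTransitive G) (S : Finset (Fin n)) (p : Fin n → Bool)
    (hk : S.card = k) (h1 : 1 ≤ k)
    (hnc : ∃ z : Fin n → Bool, mintermFn G S p z = false) :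
    (∀ (m : ℕ) (π : Fin m → Equiv.Perm (Fin n)), (∀ j, π j ∈ G) →
      (∀ j j', j ≠ j' → Disjoint (S.image (π j)) (S.image (π j'))) →
      m ≤ sens0 (mintermFn G S p)) ∧
    (∃ m : ℕ, n ≤ m * k ^ 2 ∧ m ≤ sens0 (mintermFn G S p)) := by
  constructor
  · intro m π hπ hd
    exact partOne G S p hnc m π hπ hd
  · obtain ⟨m, π, hπ, hd, hle⟩ := packing G hG S hk h1
    exact ⟨m, hle, partOne G S p hnc m π hπ hd⟩
end

section
/- Let k ≥ 8, n ≥ k², and f as defined by the cyclic occurrence of the pattern g. Then the 1-sensitivity of f satisfies s¹(f) ≤ 6k−2: for any x with f(x) = 1, the number of single-bit flips changing f to 0 is at most 6k−2. -/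
/-- The pattern predicate defining `g : {0,1}^{k²} → {0,1}`, reading a word as
`k` blocks of length `k`: block 1 equals `110^{k-2}`, the first five bits of
blocks `2..k` are 1, and the last three bits of block `k` are 1. -/
def GPat (k : ℕ) (z : ℕ → Bool) : Prop :=
  (∀ t < k, z t = decide (t < 2)) ∧
  (∀ j, 1 ≤ j → j < k → ∀ t < 5, z (j * k + t) = true) ∧
  (∀ t, k - 3 ≤ t → t < k → z ((k - 1) * k + t) = true)

open Classical in
/-- The cyclically invariant function `f : {0,1}^n → {0,1}` with
`f(x) = 1` iff `x`, viewed cyclically, contains a contiguous length-`k²`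
substring on which `g` evaluates to 1. -/
noncomputable def cycPatFn (k n : ℕ) (hn : 0 < n) : (Fin n → Bool) → Bool :=
  fun x => decide (∃ ℓ : ℕ, GPat k (fun t => x ⟨(ℓ + t) % n, Nat.mod_lt _ hn⟩))

/-- The 1-sensitivity of the cyclic pattern function is at most `6k-2`. -/
theorem cycPatFn_sens1_upper {k n : ℕ} (h8 : 8 ≤ k) (hn : k ^ 2 ≤ n)
    (hpos : 0 < n) :
    sens1 (cycPatFn k n hpos) ≤ 6 * k - 2 := by
  classical
  apply Finset.sup_le
  intro x hx
  rw [Finset.mem_filter] at hx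
  have hfx : cycPatFn k n hpos x = true := hx.2
  have hfx' : ∃ ℓ : ℕ, GPat k (fun t => x ⟨(ℓ + t) % n, Nat.mod_lt _ hpos⟩) := by
    have := hfx
    rw [cycPatFn] at this
    exact of_decide_eq_true this
  obtain ⟨ℓ, hg⟩ := hfx'
  set D : Finset ℕ :=
    (Finset.range k ∪ (Finset.Ico 1 k).biUnion
        (fun j => (Finset.range 5).image (fun t => j * k + t))) ∪
      (Finset.Ico (k - 3) k).image (fun t => (k - 1) * k + t) with hD
  have hDcard : D.card ≤ 6 * k - 2 := by
    have h1 : (Finset.range k).card = k := Finset.card_range k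
    have h2 : ((Finset.Ico 1 k).biUnion
        (fun j => (Finset.range 5).image (fun t => j * k + t))).card ≤ 5 * (k - 1) := by
      refine le_trans (Finset.card_biUnion_le) ?_
      calc ∑ j ∈ Finset.Ico 1 k, ((Finset.range 5).image (fun t => j * k + t)).card
          ≤ ∑ j ∈ Finset.Ico 1 k, 5 := by
            apply Finset.sum_le_sum
            intro j _
            exact le_trans (Finset.card_image_le) (by simp)
        _ = 5 * (k - 1) := by rw [Finset.sum_const, Nat.card_Ico]; ring
    have h3 : ((Finset.Ico (k - 3) k).image (fun t => (k - 1) * k + t)).card ≤ 3 := by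
      refine le_trans (Finset.card_image_le) ?_
      rw [Nat.card_Ico]; omega
    calc D.card ≤ _ := Finset.card_union_le _ _
      _ ≤ (Finset.range k).card + ((Finset.Ico 1 k).biUnion
            (fun j => (Finset.range 5).image (fun t => j * k + t))).card
          + ((Finset.Ico (k - 3) k).image (fun t => (k - 1) * k + t)).card := by
            gcongr; exact Finset.card_union_le _ _
      _ ≤ k + 5 * (k - 1) + 3 := by gcongr <;> simp [h1, h2, h3]
      _ ≤ 6 * k - 2 := by omega
  set S : Finset (Fin n) :=
    D.image (fun t => (⟨(ℓ + t) % n, Nat.mod_lt _ hpos⟩ : Fin n)) with hS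
  have hsub : (Finset.univ.filter fun i =>
      cycPatFn k n hpos (flipBit x i) ≠ cycPatFn k n hpos x) ⊆ S := by
    intro i hi
    rw [Finset.mem_filter] at hi
    by_contra hiS
    apply hi.2
    rw [hfx, cycPatFn]
    apply decide_eq_true
    refine ⟨ℓ, ?_⟩
    have key : ∀ t ∈ D,
        flipBit x i ⟨(ℓ + t) % n, Nat.mod_lt _ hpos⟩
          = x ⟨(ℓ + t) % n, Nat.mod_lt _ hpos⟩ := by
      intro t ht
      rw [flipBit, if_neg]
      intro h
      exact hiS (Finset.mem_image.mpr ⟨t, ht, h⟩)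
    obtain ⟨hg1, hg2, hg3⟩ := hg
    refine ⟨?_, ?_, ?_⟩
    · intro t ht
      exact (key t (Finset.mem_union_left _
        (Finset.mem_union_left _ (Finset.mem_range.mpr ht)))).trans (hg1 t ht)
    · intro j hj1 hjk t ht
      refine (key (j * k + t) (Finset.mem_union_left _ (Finset.mem_union_right _
        (Finset.mem_biUnion.mpr ⟨j, Finset.mem_Ico.mpr ⟨hj1, hjk⟩,
          Finset.mem_image.mpr ⟨t, Finset.mem_range.mpr ht, rfl⟩⟩)))).trans
        (hg2 j hj1 hjk t ht)
    · intro t ht1 ht2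
      exact (key ((k - 1) * k + t) (Finset.mem_union_right _
        (Finset.mem_image.mpr ⟨t, Finset.mem_Ico.mpr ⟨ht1, ht2⟩, rfl⟩))).trans
        (hg3 t ht1 ht2)
  calc sensAt (cycPatFn k n hpos) x ≤ S.card := Finset.card_le_card hsub
    _ ≤ D.card := Finset.card_image_le
    _ ≤ 6 * k - 2 := hDcard
end

section
/- Let k ≥ 8, n ≥ k², m = ⌊n/k²⌋, and f defined by cyclic occurrence of the pattern g. Then s⁰(f) ≥ m: there exists x with f(x) = 0 and at least m indices i with f(x^i) = 1. A witness is x = (1\underline{0}0^{k-2}(111110^{k-5})^{k-2}111110^{k-8}111)^m 0^r with r = n − k²m, where flipping any of the m underlined zeros (the second bit of each length-k² segment) creates an occurrence of the pattern. -/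
/-!
Write `K = k²`, `m = ⌊n/K⌋`, `r = n - K m`. The witness is `σ^m 0^r` with
`σ = 1 0^{k-1} (11111 0^{k-5})^{k-2} 11111 0^{k-8} 111`, and setting the second bit of any copy
of `σ` turns that copy into an occurrence of `g`, so these `m` bits are sensitive.

No occurrence of `g` exists, since every occurrence begins with `11 0^{k-2} 11`. The gaps between
ones inside a copy of `σ` have lengths `k-1` (after a lone one), `k-5` and `k-8`, so such a prefix
could only start at one of the two last ones of a copy. What follows them cyclically is
`1 0^{k-1}` or `0^r 1 0^{k-1}`, and neither fits.
-/

def OnesGapOnes (k : ℕ) (z : ℕ → Bool) : Prop :=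
  z 0 = true ∧ z 1 = true ∧ (∀ t, 2 ≤ t → t < k → z t = false) ∧ z k = true ∧ z (k + 1) = true

theorem GPat.onesGapOnes {k : ℕ} {z : ℕ → Bool} (hk : 2 ≤ k) (h : GPat k z) :
    OnesGapOnes k z := by
  obtain ⟨hfirst, hrun, -⟩ := h
  have hk0 := hrun 1 le_rfl (by omega) 0 (by omega)
  have hk1 := hrun 1 le_rfl (by omega) 1 (by omega)
  rw [one_mul] at hk0 hk1
  refine ⟨hfirst 0 (by omega), hfirst 1 (by omega), fun t ht2 htk => ?_, hk0, hk1⟩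
  rw [hfirst t htk, decide_eq_false_iff_not]
  omega

def cycIdx {n : ℕ} (hn : 0 < n) (p : ℕ) : Fin n := ⟨p % n, Nat.mod_lt _ hn⟩

theorem cycIdx_mod_add {n : ℕ} (hn : 0 < n) (ℓ t : ℕ) :
    cycIdx hn (ℓ % n + t) = cycIdx hn (ℓ + t) :=
  Fin.ext (Nat.mod_add_mod ℓ n t)

theorem cycIdx_add_self {n : ℕ} (hn : 0 < n) (p : ℕ) : cycIdx hn (n + p) = cycIdx hn p :=
  Fin.ext (Nat.add_mod_left n p)

theorem cycIdx_of_lt {n p : ℕ} (hn : 0 < n) (hp : p < n) : (cycIdx hn p : ℕ) = p :=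
  Nat.mod_eq_of_lt hp

theorem cycPatFn_eq_true_iff {k n : ℕ} (hn : 0 < n) (x : Fin n → Bool) :
    cycPatFn k n hn x = true ↔ ∃ ℓ, GPat k (fun t => x (cycIdx hn (ℓ + t))) := by
  simp only [cycPatFn, decide_eq_true_iff]
  rfl

theorem Nat.mul_add_lt_of_lt_div {K n q i : ℕ} (hq : q < n / K) (hi : i < K) : K * q + i < n :=
  (Nat.mul_add_lt_mul_of_lt_of_lt hq hi).trans_le (Nat.div_mul_le_self n K)

theorem le_sens0_of_flips {n m : ℕ} {f : (Fin n → Bool) → Bool} {x : Fin n → Bool}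
    (hx : f x = false) (e : ℕ → Fin n) (he : ∀ i < m, f (flipBit x (e i)) = true)
    (hinj : ∀ i < m, ∀ j < m, e i = e j → i = j) : m ≤ sens0 f :=
  calc m ≤ sensAt f x :=
        Finset.le_card_of_inj_on_range e (fun i hi => by simp [he i hi, hx]) hinj
    _ ≤ sens0 f := Finset.le_sup (f := fun x => sensAt f x) (by simp [hx])

/-- The offsets `s < k²` at which `σ = 1 0^{k-1} (11111 0^{k-5})^{k-2} 11111 0^{k-8} 111`
carries a one; `s` lies in block `s / k`, at position `s % k`. -/
def witnessSeg (k s : ℕ) : Prop :=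
  s = 0 ∨ (k ≤ s ∧ s % k < 5) ∨ k ^ 2 - 3 ≤ s

instance (k : ℕ) : DecidablePred (witnessSeg k) :=
  fun _ => inferInstanceAs (Decidable (_ ∨ _ ∨ _))

theorem not_witnessSeg_of_lt {k s : ℕ} (hk : 3 ≤ k) (hs0 : s ≠ 0) (hsk : s < k) :
    ¬ witnessSeg k s := by
  have : k + 3 ≤ k ^ 2 := by nlinarith
  unfold witnessSeg
  omega

theorem witnessSeg_block_start {k j : ℕ} (hj : 1 ≤ j) : witnessSeg k (k * j) := by
  refine Or.inr (Or.inl ⟨Nat.le_mul_of_pos_right k hj, ?_⟩)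
  rw [Nat.mul_mod_right]
  omega

theorem witnessSeg_eq_sub_two {k s : ℕ} (hk : 8 ≤ k) (hsK : s + 1 < k ^ 2)
    (h0 : witnessSeg k s) (h1 : witnessSeg k (s + 1))
    (hgap : ∀ t, 2 ≤ t → t < k → s + t < k ^ 2 → ¬ witnessSeg k (s + t)) :
    s = k ^ 2 - 2 := by
  have hkK : k ^ 2 = k * k := sq k
  rcases h0 with rfl | ⟨hks, hrun⟩ | hend
  · exact absurd h1 (not_witnessSeg_of_lt (by omega) one_ne_zero (by omega))
  · obtain ⟨j, t, htk, rfl⟩ : ∃ j t, t < k ∧ s = k * j + t :=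
      ⟨_, _, Nat.mod_lt s (by omega), (Nat.div_add_mod s k).symm⟩
    have hmod : ∀ i < k, (k * j + i) % k = i := fun i hi => by
      rw [Nat.mul_add_mod, Nat.mod_eq_of_lt hi]
    have hjk : j < k := by
      by_contra! h
      nlinarith [Nat.mul_le_mul_left k h]
    rw [hmod t htk] at hrun
    exfalso
    rcases Nat.lt_or_ge t 3 with ht | ht
    · refine hgap 2 le_rfl (by omega) ?_ (Or.inr (Or.inl ⟨by omega, ?_⟩))
      · nlinarith [Nat.mul_le_mul_left k (Nat.le_sub_one_of_lt hjk)]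
      · rw [add_assoc, hmod _ (by omega)]; omega
    · -- the next one starts block `j + 1`, or belongs to the final `111` if `j` is the last block
      rcases Nat.lt_or_ge (j + 1) k with hj1 | hj1
      · have hnext : k * j + t + (k - t) = k * (j + 1) := by rw [mul_add_one]; omega
        refine hgap (k - t) (by omega) (by omega) ?_ ?_ <;> rw [hnext]
        · nlinarith [Nat.mul_le_mul_left k hj1]
        · exact witnessSeg_block_start (by omega)
      · have hlast : k * j + k = k ^ 2 := by rw [hkK, ← mul_add_one]; congr 1; omega
        exact hgap (k - 5) (by omega) (by omega) (by omega) (Or.inr (Or.inr (by omega)))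
  · by_contra hne
    exact hgap 2 le_rfl (by omega) (by omega) (Or.inr (Or.inr (by omega)))

def sensWitness (k n : ℕ) : Fin n → Bool :=
  fun p => decide ((p : ℕ) < k ^ 2 * (n / k ^ 2) ∧ witnessSeg k (p % k ^ 2))

section sensWitness

variable {k n : ℕ} (hn : 0 < n)

theorem sensWitness_cycIdx_of_lt {p : ℕ} (hp : p < n) :
    sensWitness k n (cycIdx hn p) =
      decide (p < k ^ 2 * (n / k ^ 2) ∧ witnessSeg k (p % k ^ 2)) := by
  simp only [sensWitness, cycIdx_of_lt hn hp]

theorem sensWitness_cycIdx_seg {q i : ℕ} (hq : q < n / k ^ 2 ∨ k ^ 2 ∣ n) (hi : i < k ^ 2) :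
    sensWitness k n (cycIdx hn (k ^ 2 * q + i)) = decide (witnessSeg k i) := by
  have hmod : (k ^ 2 * q + i) % k ^ 2 = i := by rw [Nat.mul_add_mod, Nat.mod_eq_of_lt hi]
  rcases hq with hq | hdvd
  · have hlt : k ^ 2 * q + i < k ^ 2 * (n / k ^ 2) :=
      (Nat.mul_add_lt_mul_of_lt_of_lt hq hi).trans_eq (Nat.mul_comm _ _)
    simp [sensWitness_cycIdx_of_lt hn (Nat.mul_add_lt_of_lt_div hq hi), hmod, hlt]
  · simp only [sensWitness, cycIdx, Nat.mod_mod_of_dvd _ hdvd, hmod, Nat.mul_div_cancel' hdvd,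
      Nat.mod_lt _ hn, true_and]

theorem sensWitness_cycIdx_tail {p : ℕ} (hp : k ^ 2 * (n / k ^ 2) ≤ p) (hpn : p < n) :
    sensWitness k n (cycIdx hn p) = false := by
  simp [sensWitness_cycIdx_of_lt hn hpn, hp]

theorem sensWitness_not_onesGapOnes_sub_one (hk : 3 ≤ k) {q : ℕ} (hq : q < n / k ^ 2) :
    ¬ OnesGapOnes k (fun t => sensWitness k n (cycIdx hn (k ^ 2 * q + (k ^ 2 - 1) + t))) := by
  rintro ⟨-, h1, -, hk', -⟩
  dsimp only at h1 hk'
  have hkK : k + 3 ≤ k ^ 2 := by nlinarith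
  by_cases hnext : q + 1 < n / k ^ 2 ∨ k ^ 2 ∣ n
  · rw [show k ^ 2 * q + (k ^ 2 - 1) + k = k ^ 2 * (q + 1) + (k - 1) by rw [mul_add_one]; omega,
      sensWitness_cycIdx_seg hn hnext (by omega), decide_eq_true_iff] at hk'
    exact not_witnessSeg_of_lt hk (by omega) (by omega) hk'
  · push Not at hnext
    have hm : q + 1 = n / k ^ 2 := by omega
    have htail := Nat.mul_div_lt_iff_not_dvd.2 hnext.2
    rw [show k ^ 2 * q + (k ^ 2 - 1) + 1 = k ^ 2 * (n / k ^ 2) by rw [← hm, mul_add_one]; omega,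
      sensWitness_cycIdx_tail hn le_rfl htail] at h1
    exact Bool.false_ne_true h1

theorem sensWitness_not_onesGapOnes_sub_two (hk : 3 ≤ k) {q : ℕ} (hq : q < n / k ^ 2) :
    ¬ OnesGapOnes k (fun t => sensWitness k n (cycIdx hn (k ^ 2 * q + (k ^ 2 - 2) + t))) := by
  rintro ⟨-, -, hgap, hk', hk1⟩
  dsimp only at hgap hk' hk1
  have hkK : k + 3 ≤ k ^ 2 := by nlinarith
  by_cases hnext : q + 1 < n / k ^ 2 ∨ k ^ 2 ∣ n
  · have h2 := hgap 2 le_rfl (by omega)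
    rw [show k ^ 2 * q + (k ^ 2 - 2) + 2 = k ^ 2 * (q + 1) + 0 by rw [mul_add_one]; omega,
      sensWitness_cycIdx_seg hn hnext (by omega), decide_eq_false_iff_not] at h2
    exact h2 (Or.inl rfl)
  · -- `q` is the last copy and `r > 0`: next come `0^r` and then, cyclically, `1 0^{k-1} 1`
    push Not at hnext
    have hm : q + 1 = n / k ^ 2 := by omega
    have htail := Nat.mul_div_lt_iff_not_dvd.2 hnext.2
    have hend : k ^ 2 * q + (k ^ 2 - 2) + 2 = k ^ 2 * (n / k ^ 2) := by
      rw [← hm, mul_add_one]; omega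
    have hwrap : ∀ i < k ^ 2, sensWitness k n (cycIdx hn (n + i)) = decide (witnessSeg k i) :=
      fun i hi => by
        rw [cycIdx_add_self]
        simpa using sensWitness_cycIdx_seg hn (q := 0) (Or.inl (by omega)) hi
    obtain ⟨r, hr⟩ : ∃ r, n = k ^ 2 * (n / k ^ 2) + r := ⟨_, (Nat.add_sub_of_le htail.le).symm⟩
    rcases lt_trichotomy (r + 2) k with hrk | hrk | hrk
    · have h := hgap (r + 2) (by omega) hrk
      rw [show k ^ 2 * q + (k ^ 2 - 2) + (r + 2) = n + 0 by omega, hwrap 0 (by omega),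
        decide_eq_false_iff_not] at h
      exact h (Or.inl rfl)
    · rw [show k ^ 2 * q + (k ^ 2 - 2) + (k + 1) = n + 1 by omega, hwrap 1 (by omega),
        decide_eq_true_iff] at hk1
      exact not_witnessSeg_of_lt hk one_ne_zero (by omega) hk1
    · rw [sensWitness_cycIdx_tail hn (by omega) (by omega)] at hk'
      exact Bool.false_ne_true hk'

theorem sensWitness_not_onesGapOnes (hk : 8 ≤ k) {a : ℕ} (ha : a < n) :
    ¬ OnesGapOnes k (fun t => sensWitness k n (cycIdx hn (a + t))) := by
  intro h
  have h0 := h.1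
  dsimp only at h0
  rw [add_zero, sensWitness_cycIdx_of_lt hn ha, decide_eq_true_iff] at h0
  obtain ⟨q, s, hsK, rfl⟩ : ∃ q s, s < k ^ 2 ∧ a = k ^ 2 * q + s :=
    ⟨_, _, Nat.mod_lt a (by positivity), (Nat.div_add_mod a _).symm⟩
  rw [Nat.mul_add_mod, Nat.mod_eq_of_lt hsK] at h0
  have hq : q < n / k ^ 2 := Nat.lt_of_mul_lt_mul_left (a := k ^ 2) (by omega)
  have hseg : ∀ t, s + t < k ^ 2 →
      sensWitness k n (cycIdx hn (k ^ 2 * q + s + t)) = decide (witnessSeg k (s + t)) :=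
    fun t ht => by rw [add_assoc]; exact sensWitness_cycIdx_seg hn (Or.inl hq) ht
  rcases (show s = k ^ 2 - 1 ∨ s + 1 < k ^ 2 by omega) with rfl | hs1
  · exact sensWitness_not_onesGapOnes_sub_one hn (by omega) hq h
  · have h1 := h.2.1
    dsimp only at h1
    rw [hseg 1 hs1, decide_eq_true_iff] at h1
    have hgap : ∀ t, 2 ≤ t → t < k → s + t < k ^ 2 → ¬ witnessSeg k (s + t) :=
      fun t h2t htk ht => by simpa [hseg t ht] using h.2.2.1 t h2t htk
    obtain rfl := witnessSeg_eq_sub_two hk hs1 h0.2 h1 hgap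
    exact sensWitness_not_onesGapOnes_sub_two hn (by omega) hq h

theorem cycPatFn_sensWitness (hk : 8 ≤ k) : cycPatFn k n hn (sensWitness k n) = false := by
  rw [Bool.eq_false_iff, ne_eq, cycPatFn_eq_true_iff]
  rintro ⟨ℓ, hℓ⟩
  refine sensWitness_not_onesGapOnes hn hk (Nat.mod_lt ℓ hn) ?_
  simp only [cycIdx_mod_add]
  exact hℓ.onesGapOnes (by omega)

theorem cycPatFn_flip_sensWitness (hk : 5 ≤ k) {q : ℕ} (hq : q < n / k ^ 2) :
    cycPatFn k n hn (flipBit (sensWitness k n) (cycIdx hn (k ^ 2 * q + 1))) = true := by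
  have hkK : k + 3 ≤ k ^ 2 := by nlinarith
  have hz : ∀ t < k ^ 2, flipBit (sensWitness k n) (cycIdx hn (k ^ 2 * q + 1))
      (cycIdx hn (k ^ 2 * q + t)) = decide (t = 1 ∨ witnessSeg k t) := by
    intro t ht
    have hflip : cycIdx hn (k ^ 2 * q + t) = cycIdx hn (k ^ 2 * q + 1) ↔ t = 1 := by
      rw [Fin.ext_iff, cycIdx_of_lt hn (Nat.mul_add_lt_of_lt_div hq ht),
        cycIdx_of_lt hn (Nat.mul_add_lt_of_lt_div hq (by omega))]
      omega
    simp only [flipBit, hflip, sensWitness_cycIdx_seg hn (Or.inl hq) ht]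
    split_ifs with h1
    · simp [h1, not_witnessSeg_of_lt (k := k) (by omega) one_ne_zero (by omega)]
    · simp [h1]
  rw [cycPatFn_eq_true_iff]
  refine ⟨k ^ 2 * q, fun t ht => ?_, fun j hj1 hjk t ht5 => ?_, fun t ht3 htk => ?_⟩
  · dsimp only
    rw [hz t (by omega)]
    rcases Nat.lt_trichotomy t 1 with h | rfl | h
    · simp [show t = 0 by omega, witnessSeg]
    · simp
    · simp [not_witnessSeg_of_lt (by omega) (by omega) ht, show t ≠ 1 by omega,
        show ¬ t < 2 by omega]
  · have hlt : j * k + t < k ^ 2 := by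
      rw [sq, mul_comm j]; exact Nat.mul_add_lt_mul_of_lt_of_lt hjk (by omega)
    dsimp only
    rw [hz _ hlt, decide_eq_true_iff]
    refine Or.inr (Or.inr (Or.inl ⟨by nlinarith, ?_⟩))
    rwa [Nat.mul_add_mod_of_lt (by omega)]
  · have hlast : (k - 1) * k + k = k ^ 2 := by
      rw [Nat.sub_one_mul, Nat.sub_add_cancel (Nat.le_mul_self k), sq]
    dsimp only
    rw [hz _ (by omega), decide_eq_true_iff]
    exact Or.inr (Or.inr (Or.inr (by omega)))

end sensWitness

theorem cycPatFn_sens0_lower_general {k n : ℕ} (h8 : 8 ≤ k) (hpos : 0 < n) :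
    n / k ^ 2 ≤ sens0 (cycPatFn k n hpos) := by
  refine le_sens0_of_flips (cycPatFn_sensWitness hpos h8) (fun q => cycIdx hpos (k ^ 2 * q + 1))
    (fun q hq => cycPatFn_flip_sensWitness hpos (by omega) hq) fun i hi j hj hij => ?_
  rw [Fin.ext_iff, cycIdx_of_lt hpos (Nat.mul_add_lt_of_lt_div hi (by nlinarith)),
    cycIdx_of_lt hpos (Nat.mul_add_lt_of_lt_div hj (by nlinarith))] at hij
  exact Nat.eq_of_mul_eq_mul_left (show 0 < k ^ 2 by positivity) (by omega)

/-- The 0-sensitivity of the cyclic pattern function is at least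
`m = ⌊n/k²⌋`. -/
theorem cycPatFn_sens0_lower {k n : ℕ} (h8 : 8 ≤ k) (hn : k ^ 2 ≤ n)
    (hpos : 0 < n) :
    n / k ^ 2 ≤ sens0 (cycPatFn k n hpos) :=
  cycPatFn_sens0_lower_general h8 hpos
end

section
/- Let k ≥ 8, n ≥ k², and f defined by cyclic occurrence of the pattern g. Then s⁰(f) = O(n/k²): for every x with f(x) = 0, the number of indices i with f(x^i) = 1 is at most C·n/k² for an absolute constant C. -/
/-- positions in the pattern window forced to be `1`, other than `0,1`. -/
def Ones (k t : ℕ) : Prop :=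
  (∃ j s, 1 ≤ j ∧ j < k ∧ s < 5 ∧ t = j * k + s) ∨
  (∃ s, k - 3 ≤ s ∧ s < k ∧ t = (k - 1) * k + s)

lemma exists_three {k d : ℕ} (h8 : 8 ≤ k) (hd3 : 3 ≤ d) (hdu : d ≤ k * k - k + 1) :
    ∃ t1 t2 t3, t1 < t2 ∧ t2 < t3 ∧ d + 2 ≤ t1 ∧ t3 ≤ d + k - 1 ∧
      Ones k t1 ∧ Ones k t2 ∧ Ones k t3 := by
  obtain ⟨Q, hQ⟩ : ∃ Q, k * k = Q := ⟨_, rfl⟩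
  have hkQ : k ≤ Q := by rw [← hQ]; exact Nat.le_mul_of_pos_left k (by omega)
  rw [hQ] at hdu
  by_cases hc : d + 2 ≤ k - 1
  · exact ⟨k, k + 1, k + 2, by omega, by omega, by omega, by omega,
      Or.inl ⟨1, 0, le_refl 1, by omega, by omega, by omega⟩,
      Or.inl ⟨1, 1, le_refl 1, by omega, by omega, by omega⟩,
      Or.inl ⟨1, 2, le_refl 1, by omega, by omega, by omega⟩⟩
  · push_neg at hc
    have hkd : k ≤ d + 2 := by omega
    set j0 := (d + 2) / k with hj0def
    set r := (d + 2) % k with hrdef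
    have hsplit : k * j0 + r = d + 2 := Nat.div_add_mod _ _
    have hr : r < k := Nat.mod_lt _ (by omega)
    obtain ⟨P, hP⟩ : ∃ P, k * j0 = P := ⟨_, rfl⟩
    rw [hP] at hsplit
    have hj1 : 1 ≤ j0 := by
      rcases Nat.eq_zero_or_pos j0 with h0 | h
      · rw [h0, Nat.mul_zero] at hP; omega
      · exact h
    have hkP : k ≤ P := by
      have := Nat.mul_le_mul_left k hj1
      rw [hP, Nat.mul_one] at this; exact this
    have hj0k : j0 + 1 ≤ k := by
      by_contra hcon
      push_neg at hcon
      have h2 : k * k ≤ k * j0 := Nat.mul_le_mul_left k (by omega)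
      rw [hP, hQ] at h2; omega
    have hPQ : P + k ≤ Q := by
      have h2 := Nat.mul_le_mul_left k hj0k
      rw [Nat.mul_succ, hP, hQ] at h2; exact h2
    by_cases hr2 : r ≤ 2
    · refine ⟨d + 2, d + 3, d + 4, by omega, by omega, by omega, by omega,
        Or.inl ⟨j0, r, hj1, by omega, by omega, by rw [mul_comm, hP] <;> omega⟩,
        Or.inl ⟨j0, r + 1, hj1, by omega, by omega, by rw [mul_comm, hP] <;> omega⟩,
        Or.inl ⟨j0, r + 2, hj1, by omega, by omega, by rw [mul_comm, hP] <;> omega⟩⟩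
    · by_cases hr3 : r = 3
      · by_cases hjtop : j0 + 2 ≤ k
        · refine ⟨d + 2, d + 3, P + k, by omega, by omega, by omega, by omega,
            Or.inl ⟨j0, 3, hj1, by omega, by omega, by rw [mul_comm, hP] <;> omega⟩,
            Or.inl ⟨j0, 4, hj1, by omega, by omega, by rw [mul_comm, hP] <;> omega⟩,
            Or.inl ⟨j0 + 1, 0, by omega, by omega, by omega, by
              rw [add_mul, one_mul, mul_comm, hP] <;> omega⟩⟩
        · -- j0 + 1 = k, r = 3
          have hjk : j0 = k - 1 := by omega
          have hPC : (k - 1) * k = P := by rw [← hjk, mul_comm, hP]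
          have hPQ' : P + k = Q := by
            have : k * (j0 + 1) = k * k := by rw [show j0 + 1 = k from by omega]
            rw [Nat.mul_succ, hP, hQ] at this; omega
          refine ⟨P + (k - 3), P + (k - 2), P + (k - 1), by omega, by omega,
            by omega, by omega,
            Or.inr ⟨k - 3, le_refl _, by omega, by rw [hPC]⟩,
            Or.inr ⟨k - 2, by omega, by omega, by rw [hPC]⟩,
            Or.inr ⟨k - 1, by omega, by omega, by rw [hPC]⟩⟩
      · have hPQ' : j0 + 1 = k → P + k = Q := by
          intro hjk
          have : k * (j0 + 1) = k * k := by rw [hjk]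
          rw [Nat.mul_succ, hP, hQ] at this; omega
        by_cases hr4 : r = 4
        · have hjtop : j0 + 2 ≤ k := by
            by_contra hcon
            have := hPQ' (by omega); omega
          refine ⟨d + 2, P + k, P + k + 1, by omega, by omega, by omega, by omega,
            Or.inl ⟨j0, 4, hj1, by omega, by omega, by rw [mul_comm, hP] <;> omega⟩,
            Or.inl ⟨j0 + 1, 0, by omega, by omega, by omega, by
              rw [add_mul, one_mul, mul_comm, hP] <;> omega⟩,
            Or.inl ⟨j0 + 1, 1, by omega, by omega, by omega, by
              rw [add_mul, one_mul, mul_comm, hP] <;> omega⟩⟩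
        · have hr5 : 5 ≤ r := by omega
          have hjtop : j0 + 2 ≤ k := by
            by_contra hcon
            have := hPQ' (by omega); omega
          refine ⟨P + k, P + k + 1, P + k + 2, by omega, by omega, by omega, by omega,
            Or.inl ⟨j0 + 1, 0, by omega, by omega, by omega, by
              rw [add_mul, one_mul, mul_comm, hP] <;> omega⟩,
            Or.inl ⟨j0 + 1, 1, by omega, by omega, by omega, by
              rw [add_mul, one_mul, mul_comm, hP] <;> omega⟩,
            Or.inl ⟨j0 + 1, 2, by omega, by omega, by omega, by
              rw [add_mul, one_mul, mul_comm, hP] <;> omega⟩⟩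

lemma win_true {k n : ℕ} (hpos : 0 < n) (x : Fin n → Bool) (i : Fin n) (ℓ t : ℕ)
    (h : GPat k (fun t => flipBit x i ⟨(ℓ + t) % n, Nat.mod_lt _ hpos⟩))
    (ht : Ones k t) (hne : (⟨(ℓ + t) % n, Nat.mod_lt _ hpos⟩ : Fin n) ≠ i) :
    x ⟨(ℓ + t) % n, Nat.mod_lt _ hpos⟩ = true := by
  rcases ht with ⟨j, s, hj1, hjk, hs, rfl⟩ | ⟨s, hs1, hs2, rfl⟩
  · have h2 := h.2.1 j hj1 hjk s hs
    simpa [flipBit, hne] using h2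
  · have h2 := h.2.2 s hs1 hs2
    simpa [flipBit, hne] using h2

lemma win_false {k n : ℕ} (hpos : 0 < n) (x : Fin n → Bool) (i : Fin n) (ℓ t : ℕ)
    (h : GPat k (fun t => flipBit x i ⟨(ℓ + t) % n, Nat.mod_lt _ hpos⟩))
    (ht2 : 2 ≤ t) (htk : t < k)
    (hne : (⟨(ℓ + t) % n, Nat.mod_lt _ hpos⟩ : Fin n) ≠ i) :
    x ⟨(ℓ + t) % n, Nat.mod_lt _ hpos⟩ = false := by
  have h0 := h.1 t htk
  have hlt : ¬ t < 2 := by omega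
  simpa [flipBit, hne, hlt] using h0

lemma not_same {k n : ℕ} (hpos : 0 < n) (x : Fin n → Bool) (i i' : Fin n)
    (hne : i ≠ i') (ℓ : ℕ)
    (h : GPat k (fun t => flipBit x i ⟨(ℓ + t) % n, Nat.mod_lt _ hpos⟩))
    (h' : GPat k (fun t => flipBit x i' ⟨(ℓ + t) % n, Nat.mod_lt _ hpos⟩)) :
    GPat k (fun t => x ⟨(ℓ + t) % n, Nat.mod_lt _ hpos⟩) := by
  have key : ∀ t v, flipBit x i ⟨(ℓ + t) % n, Nat.mod_lt _ hpos⟩ = v →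
      flipBit x i' ⟨(ℓ + t) % n, Nat.mod_lt _ hpos⟩ = v →
      x ⟨(ℓ + t) % n, Nat.mod_lt _ hpos⟩ = v := by
    intro t v h1 h2
    by_cases hc : (⟨(ℓ + t) % n, Nat.mod_lt _ hpos⟩ : Fin n) = i
    · have hc' : (⟨(ℓ + t) % n, Nat.mod_lt _ hpos⟩ : Fin n) ≠ i' := by
        rw [hc]; exact hne
      simpa [flipBit, hc'] using h2
    · simpa [flipBit, hc] using h1
  exact ⟨fun t ht => key t _ (h.1 t ht) (h'.1 t ht),
    fun j hj1 hj2 t ht => key _ _ (h.2.1 j hj1 hj2 t ht) (h'.2.1 j hj1 hj2 t ht),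
    fun t ht1 ht2 => key _ _ (h.2.2 t ht1 ht2) (h'.2.2 t ht1 ht2)⟩

lemma gap_lemma {k n : ℕ} (hpos : 0 < n) (h8 : 8 ≤ k) (hn : k * k ≤ n)
    (x : Fin n → Bool) (i i' : Fin n) (ℓ d : ℕ) (hd3 : 3 ≤ d) (hdu : d ≤ k * k - k + 1)
    (h : GPat k (fun t => flipBit x i ⟨(ℓ + t) % n, Nat.mod_lt _ hpos⟩))
    (h' : GPat k (fun t => flipBit x i' ⟨(ℓ + d + t) % n, Nat.mod_lt _ hpos⟩)) : False := by
  obtain ⟨t1, t2, t3, h12, h23, hlb, hub, o1, o2, o3⟩ := exists_three h8 hd3 hdu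
  have hkk : k ≤ k * k := Nat.le_mul_of_pos_left k (by omega)
  have hmem : ∀ t, Ones k t → d + 2 ≤ t → t ≤ d + k - 1 →
      (⟨(ℓ + t) % n, Nat.mod_lt _ hpos⟩ : Fin n) = i ∨
      (⟨(ℓ + t) % n, Nat.mod_lt _ hpos⟩ : Fin n) = i' := by
    intro t ht hl hu
    by_contra hcon
    push_neg at hcon
    have h1 : x ⟨(ℓ + t) % n, Nat.mod_lt _ hpos⟩ = true :=
      win_true hpos x i ℓ t h ht hcon.1
    have he : ℓ + t = ℓ + d + (t - d) := by omega
    have hne2 : (⟨(ℓ + d + (t - d)) % n, Nat.mod_lt _ hpos⟩ : Fin n) ≠ i' := by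
      rw [← he]; exact hcon.2
    have h2 := win_false hpos x i' (ℓ + d) (t - d) h' (by omega) (by omega) hne2
    rw [← he] at h2
    rw [h1] at h2
    exact Bool.noConfusion h2
  have hdist : ∀ a b : ℕ, a < b → b - a < n →
      (⟨(ℓ + a) % n, Nat.mod_lt _ hpos⟩ : Fin n) ≠ ⟨(ℓ + b) % n, Nat.mod_lt _ hpos⟩ := by
    intro a b hab hbn hEq
    have hv : (ℓ + a) % n = (ℓ + b) % n := congrArg Fin.val hEq
    have hdvd : n ∣ (ℓ + b) - (ℓ + a) := (Nat.modEq_iff_dvd' (by omega)).mp hv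
    have := Nat.le_of_dvd (by omega) hdvd
    omega
  have d12 := hdist t1 t2 h12 (by omega)
  have d13 := hdist t1 t3 (by omega) (by omega)
  have d23 := hdist t2 t3 h23 (by omega)
  rcases hmem t1 o1 hlb (by omega) with e1 | e1 <;>
    rcases hmem t2 o2 (by omega) (by omega) with e2 | e2 <;>
      rcases hmem t3 o3 (by omega) hub with e3 | e3 <;>
        first
          | exact d12 (e1.trans e2.symm)
          | exact d13 (e1.trans e3.symm)
          | exact d23 (e2.trans e3.symm)

lemma count_gap (T : Finset ℕ) (n D : ℕ) (hD : 0 < D)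
    (hlt : ∀ a ∈ T, a < n)
    (hgap : ∀ a ∈ T, ∀ b ∈ T, a < b → b - a ≤ 2 ∨ D ≤ b - a) :
    T.card ≤ 3 * (n / D + 1) := by
  have hmaps : ∀ a ∈ T, a / D ∈ Finset.range (n / D + 1) := by
    intro a ha
    exact Finset.mem_range.mpr (Nat.lt_succ_of_le (Nat.div_le_div_right (le_of_lt (hlt a ha))))
  have hfib : ∀ q ∈ Finset.range (n / D + 1), (T.filter (fun a => a / D = q)).card ≤ 3 := by
    intro q _
    set F := T.filter (fun a => a / D = q) with hF
    rcases F.eq_empty_or_nonempty with he | hne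
    · simp [he]
    · have hm := F.min'_mem hne
      have hsub : F ⊆ Finset.Icc (F.min' hne) (F.min' hne + 2) := by
        intro a ha
        rw [Finset.mem_Icc]
        refine ⟨F.min'_le a ha, ?_⟩
        rcases eq_or_lt_of_le (F.min'_le a ha) with heq | hlt'
        · omega
        · have hmT : (F.min' hne) ∈ T := (Finset.mem_filter.mp hm).1
          have haT : a ∈ T := (Finset.mem_filter.mp ha).1
          have hq1 : F.min' hne / D = q := (Finset.mem_filter.mp hm).2
          have hq2 : a / D = q := (Finset.mem_filter.mp ha).2
          have e1 := Nat.div_add_mod (F.min' hne) D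
          have e2 := Nat.div_add_mod a D
          rw [hq1] at e1; rw [hq2] at e2
          obtain ⟨Pq, hPq⟩ : ∃ P, D * q = P := ⟨_, rfl⟩
          rw [hPq] at e1 e2
          have r1 : F.min' hne % D < D := Nat.mod_lt _ hD
          have r2 : a % D < D := Nat.mod_lt _ hD
          rcases hgap _ hmT a haT hlt' with hcase | hcase
          · omega
          · omega
      calc F.card ≤ (Finset.Icc (F.min' hne) (F.min' hne + 2)).card := Finset.card_le_card hsub
        _ = 3 := by rw [Nat.card_Icc]; omega
  calc T.card ≤ 3 * (Finset.range (n / D + 1)).card :=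
        Finset.card_le_mul_card_image_of_maps_to hmaps 3 hfib
    _ = 3 * (n / D + 1) := by rw [Finset.card_range]

/-- The 0-sensitivity of the cyclic pattern function is `O(n/k²)`. -/
theorem cycPatFn_sens0_upper :
    ∃ C : ℝ, 0 < C ∧
      ∀ (k n : ℕ) (h8 : 8 ≤ k) (hn : k ^ 2 ≤ n) (hpos : 0 < n),
        (sens0 (cycPatFn k n hpos) : ℝ) ≤ C * (n : ℝ) / (k : ℝ) ^ 2 := by
  refine ⟨100, by norm_num, ?_⟩
  intro k n h8 hn hpos
  classical
  have hn' : k * k ≤ n := by rw [pow_two] at hn; exact hn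
  have hkk : k ≤ k * k := Nat.le_mul_of_pos_left k (by omega)
  have hDpos : 0 < k * k - k + 2 := by positivity
  have hmain : sens0 (cycPatFn k n hpos) ≤ 3 * (n / (k * k - k + 2) + 1) := by
    apply Finset.sup_le
    intro x hx
    have hx0 : cycPatFn k n hpos x = false := (Finset.mem_filter.mp hx).2
    have hnoc : ¬ ∃ ℓ : ℕ, GPat k (fun t => x ⟨(ℓ + t) % n, Nat.mod_lt _ hpos⟩) := by
      intro hcon
      have h1 : cycPatFn k n hpos x = true := by
        unfold cycPatFn
        exact decide_eq_true hcon
      rw [hx0] at h1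
      exact Bool.noConfusion h1
    unfold sensAt
    set S := Finset.univ.filter
      (fun i : Fin n => cycPatFn k n hpos (flipBit x i) ≠ cycPatFn k n hpos x) with hS
    have hocc : ∀ i : Fin n, ∃ ℓ : ℕ, ℓ < n ∧
        (i ∈ S → GPat k (fun t => flipBit x i ⟨(ℓ + t) % n, Nat.mod_lt _ hpos⟩)) := by
      intro i
      by_cases hi : i ∈ S
      · have h1 : cycPatFn k n hpos (flipBit x i) = true := by
          have h2 := (Finset.mem_filter.mp hi).2
          rw [hx0] at h2
          exact Bool.ne_false_iff.mp h2
        have h2 : ∃ ℓ : ℕ, GPat k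
            (fun t => flipBit x i ⟨(ℓ + t) % n, Nat.mod_lt _ hpos⟩) := by
          unfold cycPatFn at h1
          exact of_decide_eq_true h1
        obtain ⟨ℓ, hℓ⟩ := h2
        refine ⟨ℓ % n, Nat.mod_lt _ hpos, fun _ => ?_⟩
        have heq : (fun t => flipBit x i (⟨(ℓ % n + t) % n, Nat.mod_lt _ hpos⟩ : Fin n))
            = fun t => flipBit x i ⟨(ℓ + t) % n, Nat.mod_lt _ hpos⟩ := by
          funext t
          congr 1
          exact Fin.ext (Nat.mod_add_mod ℓ n t)
        rw [heq]
        exact hℓ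
      · exact ⟨0, hpos, fun hmem => absurd hmem hi⟩
    choose L hLlt hLG using hocc
    have hinj : Set.InjOn L ↑S := by
      intro i hi i' hi' hLL
      by_contra hne
      apply hnoc
      refine ⟨L i, not_same hpos x i i' hne (L i) (hLG i (Finset.mem_coe.mp hi)) ?_⟩
      rw [hLL]
      exact hLG i' (Finset.mem_coe.mp hi')
    have hcard : S.card = (S.image L).card := (Finset.card_image_of_injOn hinj).symm
    rw [hcard]
    apply count_gap _ n _ hDpos
    · intro a ha
      obtain ⟨i, hi, rfl⟩ := Finset.mem_image.mp ha
      exact hLlt i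
    · intro a ha b hb hab
      obtain ⟨i, hi, rfl⟩ := Finset.mem_image.mp ha
      obtain ⟨i', hi', rfl⟩ := Finset.mem_image.mp hb
      by_contra hcon
      push_neg at hcon
      obtain ⟨hc1, hc2⟩ := hcon
      obtain ⟨Q, hQ⟩ : ∃ Q, k * k = Q := ⟨_, rfl⟩
      rw [hQ] at hc2
      refine gap_lemma hpos h8 hn' x i i' (L i) (L i' - L i)
        (by omega) (by rw [hQ]; omega) (hLG i hi) ?_
      have he : L i + (L i' - L i) = L i' := by omega
      rw [he]
      exact hLG i' hi'
  have hcast : ((3 * (n / (k * k - k + 2) + 1) : ℕ) : ℝ)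
      ≤ 3 * ((n : ℝ) / ((k * k - k + 2 : ℕ) : ℝ)) + 3 := by
    push_cast
    have := Nat.cast_div_le (α := ℝ) (m := n) (n := k * k - k + 2)
    push_cast at this
    linarith
  have hk0 : (0 : ℝ) < (k : ℝ) := by
    have : 0 < k := by omega
    exact_mod_cast this
  have hk2pos : (0 : ℝ) < (k : ℝ) ^ 2 := by positivity
  have hDposR : (0 : ℝ) < ((k * k - k + 2 : ℕ) : ℝ) := by exact_mod_cast hDpos
  have hk8 : (8 : ℝ) ≤ (k : ℝ) := by exact_mod_cast h8
  have hDge : (k : ℝ) ^ 2 / 2 ≤ ((k * k - k + 2 : ℕ) : ℝ) := by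
    have h1 : ((k * k - k + 2 : ℕ) : ℝ) = (k : ℝ) * k - k + 2 := by
      rw [Nat.cast_add, Nat.cast_sub hkk]
      push_cast
      ring
    rw [h1]
    nlinarith
  have hnn : (0 : ℝ) ≤ (n : ℝ) := Nat.cast_nonneg n
  have hnk : (k : ℝ) ^ 2 ≤ (n : ℝ) := by exact_mod_cast hn
  have h2 : (n : ℝ) / ((k * k - k + 2 : ℕ) : ℝ) ≤ 2 * n / (k : ℝ) ^ 2 := by
    rw [div_le_div_iff₀ hDposR hk2pos]
    nlinarith
  have h3 : (3 : ℝ) ≤ 3 * n / (k : ℝ) ^ 2 := by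
    rw [le_div_iff₀ hk2pos]
    nlinarith
  have h4 : (0 : ℝ) ≤ (n : ℝ) / (k : ℝ) ^ 2 := by positivity
  calc ((sens0 (cycPatFn k n hpos) : ℕ) : ℝ)
      ≤ ((3 * (n / (k * k - k + 2) + 1) : ℕ) : ℝ) := Nat.cast_le.mpr hmain
    _ ≤ 3 * ((n : ℝ) / ((k * k - k + 2 : ℕ) : ℝ)) + 3 := hcast
    _ ≤ 100 * (n : ℝ) / (k : ℝ) ^ 2 := by
        have h5 : 3 * ((n : ℝ) / ((k * k - k + 2 : ℕ) : ℝ)) ≤ 3 * (2 * n / (k : ℝ) ^ 2) := by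
          linarith
        have h6 : 3 * (2 * (n : ℝ) / (k : ℝ) ^ 2) + 3 * (n : ℝ) / (k : ℝ) ^ 2
            ≤ 100 * (n : ℝ) / (k : ℝ) ^ 2 := by
          have e1 : 3 * (2 * (n : ℝ) / (k : ℝ) ^ 2) = 6 * ((n : ℝ) / (k : ℝ) ^ 2) := by ring
          have e2 : 3 * (n : ℝ) / (k : ℝ) ^ 2 = 3 * ((n : ℝ) / (k : ℝ) ^ 2) := by ring
          have e3 : 100 * (n : ℝ) / (k : ℝ) ^ 2 = 100 * ((n : ℝ) / (k : ℝ) ^ 2) := by ring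
          rw [e1, e2, e3]
          linarith
        calc 3 * ((n : ℝ) / ((k * k - k + 2 : ℕ) : ℝ)) + 3
            ≤ 3 * (2 * (n : ℝ) / (k : ℝ) ^ 2) + 3 * (n : ℝ) / (k : ℝ) ^ 2 := by linarith
          _ ≤ 100 * (n : ℝ) / (k : ℝ) ^ 2 := h6
end
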